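/- arXiv:2109.05641 — 2 statements merged into one kernel-verified Lean document; each statement's English description precedes it below -/
import Mathlib

section
/- Let C ≥ 2 and d ≥ 1 be integers, h ∈ [0,1], and fix a class c ∈ Fin C. Let V_1,…,V_d and U_1,…,U_d be 2d mutually independent Fin C-valued random variables, each with law ν_c. Let W^V and W^U be the aggregated label vectors of (V_k) and (U_k), both with anchor class c. Then E[ ∑_{a ∈ Fin C} W^V_a · W^U_a ] = ((h·d+1)/(d+1))² + ((1−h)·d)² / ((C−1)(d+1)²). -/
open scoped BigOperators
open MeasureTheory ProbabilityTheory

/-- `Y` has law `ν_c`: it takes the value `c` with probability `h` and each of the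
other `C - 1` values with probability `(1 - h)/(C - 1)`. -/
def HasLawNu {Ω : Type*} [MeasurableSpace Ω] {C : ℕ} (P : Measure Ω)
    (h : ℝ) (c : Fin C) (Y : Ω → Fin C) : Prop :=
  Measurable Y ∧
    ∀ a : Fin C, P (Y ⁻¹' {a}) =
      ENNReal.ofReal (if a = c then h else (1 - h) / ((C : ℝ) - 1))

/-- The aggregated label vector of the family `X` with anchor class `c`:
`W_a = (𝟙[a = c] + #{k : X_k = a})/(d+1)`. -/
noncomputable def aggW {Ω : Type*} {C : ℕ} (d : ℕ) (c : Fin C)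
    (X : Fin d → Ω → Fin C) (ω : Ω) (a : Fin C) : ℝ :=
  ((if a = c then (1 : ℝ) else 0) +
      (Finset.univ.filter fun k => X k ω = a).card) / ((d : ℝ) + 1)


/-! The vectors `W^V` and `W^U` are functions of the disjoint subfamilies `(V_k)` and `(U_k)` of an
independent family, hence independent, so `E[W^V_a W^U_a] = E[W^V_a] E[W^U_a]`. By linearity each
factor is `(𝟙[a = c] + d ν_c(a))/(d+1)`, and summing the squares over `a` gives the formula. -/

lemma aggW_eq_sum_indicator {Ω : Type*} {C d : ℕ} (c : Fin C) (X : Fin d → Ω → Fin C)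
    (a : Fin C) :
    (fun ω => aggW d c X ω a) = fun ω =>
      ((if a = c then (1 : ℝ) else 0) + ∑ k, (X k ⁻¹' {a}).indicator (1 : Ω → ℝ) ω) /
        ((d : ℝ) + 1) := by
  classical
  ext ω
  simp only [aggW, Finset.natCast_card_filter, Set.indicator_apply, Set.mem_preimage,
    Set.mem_singleton_iff, Pi.one_apply]

lemma sum_sq_anchor_mean {C : ℕ} (hC : 1 < C) (d : ℕ) (h : ℝ) (c : Fin C) :
    ∑ a : Fin C, (((if a = c then (1 : ℝ) else 0) +
        d * (if a = c then h else (1 - h) / ((C : ℝ) - 1))) / ((d : ℝ) + 1)) ^ 2 =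
      ((h * d + 1) / ((d : ℝ) + 1)) ^ 2 +
        ((1 - h) * d) ^ 2 / (((C : ℝ) - 1) * ((d : ℝ) + 1) ^ 2) := by
  have hC1 : (C : ℝ) - 1 ≠ 0 := sub_ne_zero.2 (by exact_mod_cast hC.ne')
  rw [← Finset.add_sum_erase _ _ (Finset.mem_univ c), Finset.sum_congr rfl fun a ha => by
    rw [if_neg (Finset.ne_of_mem_erase ha), if_neg (Finset.ne_of_mem_erase ha)]]
  rw [Finset.sum_const, Finset.card_erase_of_mem (Finset.mem_univ c), Finset.card_univ,
    Fintype.card_fin, nsmul_eq_mul, Nat.cast_pred (by omega), if_pos rfl, if_pos rfl]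
  field_simp
  ring

section AggregatedLabel

variable {Ω : Type*} [MeasurableSpace Ω] {P : Measure Ω} {C d : ℕ}

lemma HasLawNu.measureReal_preimage_singleton {h : ℝ} {c : Fin C} {Y : Ω → Fin C}
    (hY : HasLawNu P h c Y) (h0 : 0 ≤ h) (h1 : h ≤ 1) (a : Fin C) :
    P.real (Y ⁻¹' {a}) = if a = c then h else (1 - h) / ((C : ℝ) - 1) := by
  have hC : (1 : ℝ) ≤ C := by exact_mod_cast c.pos
  rw [measureReal_def, hY.2 a, ENNReal.toReal_ofReal]
  split_ifs
  · exact h0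
  · exact div_nonneg (by linarith) (by linarith)

variable {X : Fin d → Ω → Fin C}

lemma integrable_aggW [IsFiniteMeasure P] (hX : ∀ k, Measurable (X k)) (c a : Fin C) :
    Integrable (fun ω => aggW d c X ω a) P := by
  rw [aggW_eq_sum_indicator]
  refine ((integrable_const _).add (integrable_finsetSum _ fun k _ => ?_)).div_const _
  exact (integrable_const 1).indicator (hX k (measurableSet_singleton a))

lemma integral_aggW [IsProbabilityMeasure P] (hX : ∀ k, Measurable (X k)) (c a : Fin C) :
    ∫ ω, aggW d c X ω a ∂P =
      ((if a = c then (1 : ℝ) else 0) + ∑ k, P.real (X k ⁻¹' {a})) / ((d : ℝ) + 1) := by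
  have hind : ∀ k, Integrable ((X k ⁻¹' {a}).indicator (1 : Ω → ℝ)) P := fun k =>
    (integrable_const 1).indicator (hX k (measurableSet_singleton a))
  rw [aggW_eq_sum_indicator, integral_div, integral_add (integrable_const _)
    (integrable_finsetSum _ fun k _ => hind k), integral_finsetSum _ fun k _ => hind k]
  simp only [integral_const, probReal_univ, one_smul,
    integral_indicator_one (hX _ (measurableSet_singleton a))]

lemma integral_aggW_of_hasLawNu [IsProbabilityMeasure P] {h : ℝ} {c : Fin C}
    (hX : ∀ k, HasLawNu P h c (X k)) (h0 : 0 ≤ h) (h1 : h ≤ 1) (a : Fin C) :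
    ∫ ω, aggW d c X ω a ∂P =
      ((if a = c then (1 : ℝ) else 0) +
        d * (if a = c then h else (1 - h) / ((C : ℝ) - 1))) / ((d : ℝ) + 1) := by
  simp only [integral_aggW (fun k => (hX k).1), fun k => (hX k).measureReal_preimage_singleton h0 h1,
    Finset.sum_const, Finset.card_univ, Fintype.card_fin, nsmul_eq_mul]

lemma indepFun_aggW_of_iIndepFun_sumElim {V U : Fin d → Ω → Fin C}
    (hindep : iIndepFun (Sum.elim V U) P) (hV : ∀ k, Measurable (V k))
    (hU : ∀ k, Measurable (U k)) (c a : Fin C) :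
    IndepFun (fun ω => aggW d c V ω a) (fun ω => aggW d c U ω a) P := by
  have hfamilies := hindep.indepFun_finset (Finset.univ.map .inl) (Finset.univ.map .inr)
    (by simp [Finset.disjoint_left]) (Sum.forall.2 ⟨hV, hU⟩)
  have hcomp := hfamilies.comp
    (φ := fun x => aggW d c (fun k x => x ⟨.inl k, by simp⟩) x a)
    (ψ := fun x => aggW d c (fun k x => x ⟨.inr k, by simp⟩) x a)
    .of_discrete .of_discrete
  exact hcomp

end AggregatedLabel

theorem expectation_similarity_same_class_general
    {Ω : Type*} [MeasurableSpace Ω] (P : Measure Ω) [IsProbabilityMeasure P]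
    (C d : ℕ) (hC : 2 ≤ C) (h : ℝ) (h0 : 0 ≤ h) (h1 : h ≤ 1)
    (c : Fin C) (V U : Fin d → Ω → Fin C)
    (hlawV : ∀ k, HasLawNu P h c (V k)) (hlawU : ∀ k, HasLawNu P h c (U k))
    (hindep : iIndepFun (Sum.elim V U) P) :
    ∫ ω, ∑ a, aggW d c V ω a * aggW d c U ω a ∂P =
      ((h * d + 1) / ((d : ℝ) + 1)) ^ 2 +
        ((1 - h) * d) ^ 2 / (((C : ℝ) - 1) * ((d : ℝ) + 1) ^ 2) := by
  have hV : ∀ k, Measurable (V k) := fun k => (hlawV k).1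
  have hU : ∀ k, Measurable (U k) := fun k => (hlawU k).1
  have hindepW := indepFun_aggW_of_iIndepFun_sumElim hindep hV hU c
  have hintW : ∀ a, Integrable (fun ω => aggW d c V ω a * aggW d c U ω a) P := fun a =>
    (hindepW a).integrable_mul (integrable_aggW hV c a) (integrable_aggW hU c a)
  calc ∫ ω, ∑ a, aggW d c V ω a * aggW d c U ω a ∂P
      = ∑ a, (∫ ω, aggW d c V ω a ∂P) * ∫ ω, aggW d c U ω a ∂P := by
        rw [integral_finsetSum _ fun a _ => hintW a]
        exact Finset.sum_congr rfl fun a _ => (hindepW a).integral_mul_eq_mul_integral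
          (integrable_aggW hV c a).aestronglyMeasurable
          (integrable_aggW hU c a).aestronglyMeasurable
    _ = ∑ a : Fin C, (((if a = c then (1 : ℝ) else 0) +
          d * (if a = c then h else (1 - h) / ((C : ℝ) - 1))) / ((d : ℝ) + 1)) ^ 2 := by
        simp only [integral_aggW_of_hasLawNu hlawV h0 h1, integral_aggW_of_hasLawNu hlawU h0 h1,
          sq]
    _ = _ := sum_sq_anchor_mean hC d h c

theorem expectation_similarity_same_class
    {Ω : Type*} [MeasurableSpace Ω] (P : Measure Ω) [IsProbabilityMeasure P]
    (C d : ℕ) (hC : 2 ≤ C) (hd : 1 ≤ d) (h : ℝ) (h0 : 0 ≤ h) (h1 : h ≤ 1)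
    (c : Fin C) (V U : Fin d → Ω → Fin C)
    (hlawV : ∀ k, HasLawNu P h c (V k)) (hlawU : ∀ k, HasLawNu P h c (U k))
    (hindep : iIndepFun (Sum.elim V U) P) :
    ∫ ω, ∑ a, aggW d c V ω a * aggW d c U ω a ∂P =
      ((h * d + 1) / ((d : ℝ) + 1)) ^ 2 +
        ((1 - h) * d) ^ 2 / (((C : ℝ) - 1) * ((d : ℝ) + 1) ^ 2) :=
  expectation_similarity_same_class_general P C d hC h h0 h1 c V U hlawV hlawU hindep
end

section
/- Let C = 2, let Â ∈ ℝ^{N×N} be row-stochastic, Z ∈ ℝ^{N×2} a one-hot label matrix, and W = ÂZ. For any two nodes v, u in different classes (c_v ≠ c_u), the (v,u)-entry of S(I−Â, Z) = (I−Â)ZZᵀ(I−Â)ᵀ equals W_{v,c_u}·(W_{u,c_u} − 1) + W_{u,c_v}·(W_{v,c_v} − 1), and in particular S(I−Â, Z)_{v,u} ≤ 0. -/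
open scoped BigOperators Matrix

/-- The post-aggregation similarity matrix `S(M, X) = (M X)(M X)ᵀ`. -/
def simMatrix {N F : ℕ} (M : Matrix (Fin N) (Fin N) ℝ)
    (X : Matrix (Fin N) (Fin F) ℝ) : Matrix (Fin N) (Fin N) ℝ :=
  (M * X) * (M * X)ᵀ

/-!
Write `W = ÂZ`, so that `(I - Â)Z = Z - W` and `S(I - Â, Z)_{v,u} = ∑_c (Z_{v,c} - W_{v,c})(Z_{u,c} - W_{u,c})`.
With two classes and `c_v ≠ c_u` the sum has exactly the terms `c = c_v` and `c = c_u`, which give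
the stated formula. Since `Â` is row-stochastic and `Z` has entries in `[0, 1]`, so does `W`; hence
each of the two terms of the formula is a nonnegative number times a nonpositive one.
-/

theorem simMatrix_apply {N F : ℕ} (M : Matrix (Fin N) (Fin N) ℝ) (X : Matrix (Fin N) (Fin F) ℝ)
    (v u : Fin N) : simMatrix M X v u = ∑ c, (M * X) v c * (M * X) u c := by
  simp only [simMatrix, Matrix.mul_apply, Matrix.transpose_apply]

theorem Matrix.one_sub_mul_apply {n m R : Type*} [Fintype n] [DecidableEq n] [Ring R]
    (A : Matrix n n R) (X : Matrix n m R) (i : n) (j : m) :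
    ((1 - A : Matrix n n R) * X) i j = X i j - (A * X) i j := by
  rw [Matrix.sub_mul, Matrix.one_mul, Matrix.sub_apply]

section RowStochastic

variable {n m : Type*} [Fintype n] {A : Matrix n n ℝ} {X : Matrix n m ℝ}

theorem Matrix.mul_apply_nonneg_of_nonneg (hA : ∀ i j, 0 ≤ A i j) (hX : ∀ i j, 0 ≤ X i j)
    (i : n) (j : m) : 0 ≤ (A * X) i j :=
  Finset.sum_nonneg fun k _ => mul_nonneg (hA i k) (hX k j)

theorem Matrix.mul_apply_le_one_of_rowStochastic (hA0 : ∀ i j, 0 ≤ A i j)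
    (hA1 : ∀ i, ∑ j, A i j = 1) (hX : ∀ i j, X i j ≤ 1) (i : n) (j : m) :
    (A * X) i j ≤ 1 :=
  calc (A * X) i j = ∑ k, A i k * X k j := Matrix.mul_apply
    _ ≤ ∑ k, A i k := Finset.sum_le_sum fun k _ => mul_le_of_le_one_right (hA0 i k) (hX k j)
    _ = 1 := hA1 i

end RowStochastic

theorem Fin.sum_univ_two_of_ne {M : Type*} [AddCommMonoid M] (f : Fin 2 → M) {a b : Fin 2}
    (hab : a ≠ b) : ∑ c, f c = f a + f b := by
  fin_cases a <;> fin_cases b <;> simp_all [Fin.sum_univ_two, add_comm]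

theorem simMatrix_highpass_entry_binary_different_class
    {N : ℕ} (A : Matrix (Fin N) (Fin N) ℝ)
    (hA0 : ∀ i j, 0 ≤ A i j) (hA1 : ∀ i, ∑ j, A i j = 1)
    (Z : Matrix (Fin N) (Fin 2) ℝ) (cl : Fin N → Fin 2)
    (hZ : ∀ v c, Z v c = if c = cl v then 1 else 0)
    (v u : Fin N) (hvu : cl v ≠ cl u) :
    simMatrix (1 - A) Z v u =
        (A * Z) v (cl u) * ((A * Z) u (cl u) - 1) +
          (A * Z) u (cl v) * ((A * Z) v (cl v) - 1) ∧
      simMatrix (1 - A) Z v u ≤ 0 := by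
  have hZ0 : ∀ i c, 0 ≤ Z i c := fun i c => by rw [hZ]; split_ifs <;> norm_num
  have hZ1 : ∀ i c, Z i c ≤ 1 := fun i c => by rw [hZ]; split_ifs <;> norm_num
  have hentry : simMatrix (1 - A) Z v u =
      (A * Z) v (cl u) * ((A * Z) u (cl u) - 1) +
        (A * Z) u (cl v) * ((A * Z) v (cl v) - 1) := by
    rw [simMatrix_apply, Fin.sum_univ_two_of_ne _ hvu]
    simp only [Matrix.one_sub_mul_apply, hZ, if_true, hvu, hvu.symm, if_false]
    ring
  refine ⟨hentry, hentry ▸ add_nonpos ?_ ?_⟩ <;>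
    refine mul_nonpos_of_nonneg_of_nonpos (Matrix.mul_apply_nonneg_of_nonneg hA0 hZ0 _ _)
      (sub_nonpos.mpr (Matrix.mul_apply_le_one_of_rowStochastic hA0 hA1 hZ1 _ _))
end
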